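/- arXiv:1504.06496 — 2 statements merged into one kernel-verified Lean document; each statement's English description precedes it below -/
import Mathlib

section
/- Let n = 2m+1 be odd with m ≥ 1. Define permutations of {1,...,n}: s₁ = (2 3)(4 5)···(2m 2m+1) and s₂ = (1 2)(3 4)···(2m−1 2m) (products of disjoint transpositions). Then the commutator [s₁, s₂] = s₁s₂s₁⁻¹s₂⁻¹ is a single cycle of length n. -/
/-!
Both `s₁` and `s₂` are involutions, so the commutator is `(s₁ s₂)²`. Listing the points around a
regular `n`-gon as `1, 3, 5, …, n, n-1, …, 4, 2`, the permutations `s₁` and `s₂` become two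
reflections of the polygon whose axes are adjacent, so `s₁ s₂` is conjugate to the rotation by one
step, an `n`-cycle. The square of an `n`-cycle is again an `n`-cycle because `n` is odd.
-/

open Equiv Equiv.Perm

namespace List

variable {α : Type*} [DecidableEq α]

theorem prod_ofFn_swap_apply_of_forall_ne {m : ℕ} {a b : Fin m → α} {x : α}
    (hxa : ∀ j, x ≠ a j) (hxb : ∀ j, x ≠ b j) :
    (ofFn fun j => Equiv.swap (a j) (b j)).prod x = x := by
  induction m with
  | zero => simp
  | succ m ih =>
    rw [ofFn_succ, prod_cons, Perm.mul_apply,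
      ih (fun j => hxa j.succ) (fun j => hxb j.succ), swap_apply_of_ne_of_ne (hxa 0) (hxb 0)]

theorem prod_ofFn_swap_apply_left {m : ℕ} {a b : Fin m → α} (ha : a.Injective)
    (hb : b.Injective) (hab : ∀ i j, a i ≠ b j) (k : Fin m) :
    (ofFn fun j => Equiv.swap (a j) (b j)).prod (a k) = b k := by
  induction m with
  | zero => exact k.elim0
  | succ m ih =>
    rw [ofFn_succ, prod_cons, Perm.mul_apply]
    cases k using Fin.cases with
    | zero =>
      rw [prod_ofFn_swap_apply_of_forall_ne (fun j => ha.ne (Fin.succ_ne_zero j).symm)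
        (fun j => hab 0 j.succ), swap_apply_left]
    | succ k =>
      rw [ih (a := fun j => a j.succ) (b := fun j => b j.succ) (ha.comp (Fin.succ_injective _))
        (hb.comp (Fin.succ_injective _)) (fun i j => hab i.succ j.succ)]
      exact swap_apply_of_ne_of_ne (hab 0 k.succ).symm (hb.ne (Fin.succ_ne_zero k))

theorem prod_ofFn_swap_apply_right {m : ℕ} {a b : Fin m → α} (ha : a.Injective)
    (hb : b.Injective) (hab : ∀ i j, a i ≠ b j) (k : Fin m) :
    (ofFn fun j => Equiv.swap (a j) (b j)).prod (b k) = a k := by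
  simp_rw [Equiv.swap_comm (a _)]
  exact prod_ofFn_swap_apply_left hb ha (fun i j => (hab j i).symm) k

end List

def adjacentSwaps (N m c : ℕ) (h : 2 * m + c ≤ N) : Perm (Fin N) :=
  (List.ofFn fun j : Fin m => swap (⟨2 * j + c, by have := j.isLt; omega⟩ : Fin N)
    ⟨2 * j + c + 1, by have := j.isLt; omega⟩).prod

theorem adjacentSwaps_val {N m c : ℕ} (h : 2 * m + c ≤ N) (x : Fin N) :
    (adjacentSwaps N m c h x : ℕ) =
      if (x : ℕ) < c ∨ 2 * m + c ≤ x then (x : ℕ)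
      else if (x : ℕ) % 2 = c % 2 then (x : ℕ) + 1 else (x : ℕ) - 1 := by
  unfold adjacentSwaps
  have hx := x.isLt
  split_ifs with hfix hpar
  · exact congrArg Fin.val <| List.prod_ofFn_swap_apply_of_forall_ne
      (fun j => by have := j.isLt; simp only [ne_eq, Fin.ext_iff]; omega)
      (fun j => by have := j.isLt; simp only [ne_eq, Fin.ext_iff]; omega)
  all_goals
    have ha : Function.Injective fun j : Fin m => (⟨2 * j + c, by omega⟩ : Fin N) := by
      intro i j hij; simp only [Fin.mk.injEq] at hij; omega
    have hb : Function.Injective fun j : Fin m => (⟨2 * j + c + 1, by omega⟩ : Fin N) := by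
      intro i j hij; simp only [Fin.mk.injEq] at hij; omega
    have hab (i j : Fin m) : (⟨2 * i + c, by omega⟩ : Fin N) ≠ ⟨2 * j + c + 1, by omega⟩ := by
      simp only [ne_eq, Fin.mk.injEq]; omega
  · have hj : (x - c) / 2 < m := by omega
    rw [show x = ⟨2 * ((x - c) / 2) + c, by omega⟩ from Fin.ext (by dsimp only; omega),
      List.prod_ofFn_swap_apply_left ha hb hab ⟨_, hj⟩]
  · have hj : (x - c) / 2 < m := by omega
    rw [show x = ⟨2 * ((x - c) / 2) + c + 1, by omega⟩ from Fin.ext (by dsimp only; omega),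
      List.prod_ofFn_swap_apply_right ha hb hab ⟨_, hj⟩]
    rfl

theorem adjacentSwaps_mul_self (N m c : ℕ) (h : 2 * m + c ≤ N) :
    adjacentSwaps N m c h * adjacentSwaps N m c h = 1 := by
  ext x
  have h₁ := adjacentSwaps_val h x
  have h₂ := adjacentSwaps_val h (adjacentSwaps N m c h x)
  have := x.isLt
  rw [Perm.mul_apply, Perm.one_apply]
  split_ifs at h₁ h₂ <;> omega

/-- In this labelling of the vertices of the `(2m+1)`-gon, `adjacentSwaps _ m 0 _` and
`adjacentSwaps _ m 1 _` act as the reflections `k ↦ -1-k` and `k ↦ -k`. -/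
noncomputable def polygonLabel (m : ℕ) : Perm (Fin (2 * m + 1)) :=
  Equiv.ofBijective
    (fun k => if h : k.val ≤ m then ⟨2 * k, by omega⟩ else ⟨2 * (2 * m - k) + 1, by omega⟩)
    (Finite.injective_iff_bijective.1 fun k l hkl => by
      have := k.isLt; have := l.isLt
      split_ifs at hkl <;> simp only [Fin.mk.injEq] at hkl <;> omega)

theorem polygonLabel_val (m : ℕ) (k : Fin (2 * m + 1)) :
    (polygonLabel m k : ℕ) = if (k : ℕ) ≤ m then 2 * (k : ℕ) else 2 * (2 * m - k) + 1 := by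
  simp only [polygonLabel, Equiv.ofBijective_apply]
  split_ifs <;> rfl

theorem adjacentSwaps_one_mul_adjacentSwaps_zero_apply_polygonLabel (m : ℕ)
    (k : Fin (2 * m + 1)) :
    (adjacentSwaps (2 * m + 1) m 1 le_rfl * adjacentSwaps (2 * m + 1) m 0 (by omega))
      (polygonLabel m k) = polygonLabel m (finRotate (2 * m + 1) k) := by
  ext
  have hk := k.isLt
  have hr : (finRotate (2 * m + 1) k : ℕ) = if (k : ℕ) = 2 * m then 0 else (k : ℕ) + 1 := by
    simpa only [finRotate_apply, Fin.ext_iff, Fin.val_last] using Fin.val_add_one k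
  have h₁ := polygonLabel_val m k
  have h₂ := adjacentSwaps_val (m := m) (c := 0) (by omega) (polygonLabel m k)
  have h₃ := adjacentSwaps_val (m := m) (c := 1) le_rfl
    (adjacentSwaps (2 * m + 1) m 0 (by omega) (polygonLabel m k))
  have h₄ := polygonLabel_val m (finRotate (2 * m + 1) k)
  rw [Perm.mul_apply]
  split_ifs at h₁ h₂ h₃ h₄ hr <;> omega

theorem adjacentSwaps_one_mul_adjacentSwaps_zero (m : ℕ) :
    adjacentSwaps (2 * m + 1) m 1 le_rfl * adjacentSwaps (2 * m + 1) m 0 (by omega) =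
      polygonLabel m * finRotate (2 * m + 1) * (polygonLabel m)⁻¹ := by
  rw [eq_mul_inv_iff_mul_eq]
  ext1 k
  exact adjacentSwaps_one_mul_adjacentSwaps_zero_apply_polygonLabel m k


/-- For odd `n = 2m+1`, with `s₁ = (2 3)(4 5)⋯(2m 2m+1)` and
`s₂ = (1 2)(3 4)⋯(2m-1 2m)` (written `0`-based on `Fin (2m+1)`),
the commutator `s₁ s₂ s₁⁻¹ s₂⁻¹` is a single cycle of length `n`. -/
theorem stmt_5 (m : ℕ) (hm : 1 ≤ m)
    (s₁ s₂ : Equiv.Perm (Fin (2 * m + 1)))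
    (hs₁ : s₁ = (List.ofFn (fun j : Fin m =>
      Equiv.swap (⟨2 * (j : ℕ) + 1, by have := j.isLt; omega⟩ : Fin (2 * m + 1))
                 (⟨2 * (j : ℕ) + 2, by have := j.isLt; omega⟩ : Fin (2 * m + 1)))).prod)
    (hs₂ : s₂ = (List.ofFn (fun j : Fin m =>
      Equiv.swap (⟨2 * (j : ℕ), by have := j.isLt; omega⟩ : Fin (2 * m + 1))
                 (⟨2 * (j : ℕ) + 1, by have := j.isLt; omega⟩ : Fin (2 * m + 1)))).prod) :
    (s₁ * s₂ * s₁⁻¹ * s₂⁻¹).IsCycle ∧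
      (s₁ * s₂ * s₁⁻¹ * s₂⁻¹).support = Finset.univ := by
  replace hs₁ : s₁ = adjacentSwaps (2 * m + 1) m 1 le_rfl := hs₁
  replace hs₂ : s₂ = adjacentSwaps (2 * m + 1) m 0 (by omega) := hs₂
  have hcomm : s₁ * s₂ * s₁⁻¹ * s₂⁻¹ = (s₁ * s₂) ^ 2 := by
    rw [inv_eq_of_mul_eq_one_right (hs₁ ▸ adjacentSwaps_mul_self ..),
      inv_eq_of_mul_eq_one_right (hs₂ ▸ adjacentSwaps_mul_self ..), sq, mul_assoc]
  have hrot : s₁ * s₂ = polygonLabel m * finRotate (2 * m + 1) * (polygonLabel m)⁻¹ :=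
    hs₁ ▸ hs₂ ▸ adjacentSwaps_one_mul_adjacentSwaps_zero m
  have hcycle : (s₁ * s₂).IsCycle := hrot ▸ (isCycle_finRotate_of_le (by omega)).conj
  have hsupport : (s₁ * s₂).support = Finset.univ := by
    rw [hrot, support_conj, support_finRotate_of_le (by omega)]
    simp
  have hcop : Nat.Coprime 2 (orderOf (s₁ * s₂)) := by
    rw [hcycle.orderOf, hsupport, Finset.card_univ, Fintype.card_fin, Nat.coprime_two_left]
    exact odd_two_mul_add_one m
  rw [hcomm, support_pow_coprime hcop, hsupport]
  exact ⟨hcycle.pow_iff.2 hcop, rfl⟩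
end

section
/- Let n = 2m be even with m ≥ 2. Define permutations of {1,...,n}: s₁ = (2 3)(4 5)···(2m−2 2m−1) and s₂ = (1 2)(3 4)···(2m−1 2m). Then the commutator [s₁, s₂] is a product of two disjoint cycles each of length m = n/2. -/
/-!
Both `s₁` and `s₂` are involutions, so `[s₁, s₂] = (s₁ s₂)²`. The product `s₁ s₂` is a single
`2m`-cycle, `0 → 2 → 4 → ⋯ → 2m-2 → 2m-1 → 2m-3 → ⋯ → 3 → 1 → 0` (the rotation of the dihedral
group generated by the two reflections), so it is conjugate to `finRotate (2 * m)`. The square of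
a `2m`-cycle splits into its even-indexed and odd-indexed points: two disjoint `m`-cycles.
-/

open Equiv Equiv.Perm Function

section ProdSwap

variable {α : Type*} [DecidableEq α] {k : ℕ} {a b : Fin k → α}

theorem pairwise_disjoint_ofFn_swap (h : Injective (Sum.elim a b)) :
    (List.ofFn fun j => swap (a j) (b j)).Pairwise Perm.Disjoint := by
  refine List.pairwise_ofFn.2 fun i j hij => disjoint_swap_swap ?_
  have hnd : [Sum.inl i, Sum.inr i, Sum.inl j, Sum.inr j].Nodup := by simp [hij.ne]
  exact hnd.map h

theorem prod_ofFn_swap_apply_left [Fintype α] (h : Injective (Sum.elim a b)) (j : Fin k) :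
    (List.ofFn fun j => swap (a j) (b j)).prod (a j) = b j := by
  have hab : a j ≠ b j := h.ne (Sum.inl_ne_inr (a := j) (b := j))
  rw [← eq_on_support_mem_disjoint (List.mem_ofFn.2 ⟨j, rfl⟩) (pairwise_disjoint_ofFn_swap h),
    swap_apply_left]
  simp [support_swap hab]

theorem prod_ofFn_swap_apply_right [Fintype α] (h : Injective (Sum.elim a b)) (j : Fin k) :
    (List.ofFn fun j => swap (a j) (b j)).prod (b j) = a j := by
  have h' : Injective (Sum.elim b a) := by simpa using h.comp Sum.swap_leftInverse.injective
  simpa only [swap_comm (b _)] using prod_ofFn_swap_apply_left h' j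

theorem prod_ofFn_swap_apply_of_forall_ne {x : α} (hx : ∀ j, a j ≠ x ∧ b j ≠ x) :
    (List.ofFn fun j => swap (a j) (b j)).prod x = x := by
  have hfix : ∀ σ ∈ List.ofFn fun j => swap (a j) (b j),
      σ ∈ MulAction.stabilizer (Perm α) x := by
    simp only [List.mem_ofFn, forall_exists_index, forall_apply_eq_imp_iff]
    exact fun j => swap_apply_of_ne_of_ne (hx j).1.symm (hx j).2.symm
  exact (MulAction.stabilizer (Perm α) x).list_prod_mem hfix

end ProdSwap

theorem mul_mul_inv_mul_inv_eq_sq {G : Type*} [Group G] {a b : G} (ha : a * a = 1)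
    (hb : b * b = 1) :
    a * b * a⁻¹ * b⁻¹ = (a * b) ^ 2 := by
  rw [inv_eq_of_mul_eq_one_right ha, inv_eq_of_mul_eq_one_right hb, sq]
  simp only [mul_assoc]

theorem val_finRotate {n : ℕ} (i : Fin n) :
    (finRotate n i : ℕ) = if (i : ℕ) + 1 = n then (0 : ℕ) else i + 1 := by
  obtain _ | n := n
  · exact i.elim0
  · rw [coe_finRotate]
    simp [Fin.ext_iff]

section FormPerm

variable {α : Type*} [DecidableEq α] {k : ℕ} {f : Fin k → α}

theorem formPerm_ofFn_apply (hf : Injective f) (j : Fin k) :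
    (List.ofFn f).formPerm (f j) = f (finRotate k j) := by
  have := List.formPerm_apply_getElem (List.ofFn f) (List.nodup_ofFn.2 hf) j (by simp)
  simp only [List.getElem_ofFn, List.length_ofFn] at this
  rw [this]
  congr 1
  ext
  rw [val_finRotate]
  split_ifs with h
  · simp [h]
  · exact Nat.mod_eq_of_lt (by omega)

theorem cycleType_formPerm_ofFn [Fintype α] (hf : Injective f) (hk : 2 ≤ k) :
    (List.ofFn f).formPerm.cycleType = {k} := by
  have hnd : (List.ofFn f).Nodup := List.nodup_ofFn.2 hf
  have hlen : ∀ x, List.ofFn f ≠ [x] := fun x hx => by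
    have := congrArg List.length hx
    simp at this
    omega
  rw [(List.isCycle_formPerm hnd (by simpa using hk)).cycleType,
    List.support_formPerm_of_nodup _ hnd hlen, List.toFinset_card_of_nodup hnd, List.length_ofFn]

end FormPerm

section FinRotate

variable (m : ℕ)

def finEven (j : Fin m) : Fin (2 * m) := ⟨2 * (j : ℕ), by omega⟩

def finOdd (j : Fin m) : Fin (2 * m) := ⟨2 * (j : ℕ) + 1, by omega⟩

theorem finEven_injective : Injective (finEven m) := fun i j h => by
  simp only [finEven, Fin.ext_iff] at h
  exact Fin.ext (by omega)

theorem finOdd_injective : Injective (finOdd m) := fun i j h => by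
  simp only [finOdd, Fin.ext_iff] at h
  exact Fin.ext (by omega)

theorem finEven_ne_finOdd (i j : Fin m) : finEven m i ≠ finOdd m j := by
  simp only [finEven, finOdd, ne_eq, Fin.ext_iff]
  omega

theorem finEven_notMem_ofFn_finOdd (j : Fin m) : finEven m j ∉ List.ofFn (finOdd m) := by
  simpa [List.mem_ofFn] using fun i => (finEven_ne_finOdd m j i).symm

theorem finOdd_notMem_ofFn_finEven (j : Fin m) : finOdd m j ∉ List.ofFn (finEven m) := by
  simpa [List.mem_ofFn] using fun i => finEven_ne_finOdd m i j

theorem exists_eq_finEven_or_finOdd (x : Fin (2 * m)) :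
    (∃ j, x = finEven m j) ∨ ∃ j, x = finOdd m j := by
  rcases Nat.even_or_odd' x with ⟨j, hj | hj⟩
  · exact .inl ⟨⟨j, by omega⟩, Fin.ext hj⟩
  · exact .inr ⟨⟨j, by omega⟩, Fin.ext hj⟩

theorem disjoint_formPerm_ofFn_finEven_finOdd :
    Disjoint (List.ofFn (finEven m)).formPerm (List.ofFn (finOdd m)).formPerm := by
  intro x
  rcases exists_eq_finEven_or_finOdd m x with ⟨j, rfl⟩ | ⟨j, rfl⟩
  · exact .inr (List.formPerm_apply_of_notMem (finEven_notMem_ofFn_finOdd m j))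
  · exact .inl (List.formPerm_apply_of_notMem (finOdd_notMem_ofFn_finEven m j))

theorem finRotate_sq_eq_formPerm_mul_formPerm :
    finRotate (2 * m) ^ 2 =
      (List.ofFn (finEven m)).formPerm * (List.ofFn (finOdd m)).formPerm := by
  ext x
  rcases exists_eq_finEven_or_finOdd m x with ⟨j, rfl⟩ | ⟨j, rfl⟩
  · rw [Perm.mul_apply, List.formPerm_apply_of_notMem (finEven_notMem_ofFn_finOdd m j),
      formPerm_ofFn_apply (finEven_injective m)]
    simp only [sq, Perm.mul_apply, val_finRotate, finEven]
    split_ifs <;> omega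
  · rw [Perm.mul_apply, formPerm_ofFn_apply (finOdd_injective m),
      List.formPerm_apply_of_notMem (finOdd_notMem_ofFn_finEven m _)]
    simp only [sq, Perm.mul_apply, val_finRotate, finOdd]
    split_ifs <;> omega

end FinRotate

theorem cycleType_finRotate_sq {m : ℕ} (hm : 2 ≤ m) :
    (finRotate (2 * m) ^ 2).cycleType = {m, m} := by
  rw [finRotate_sq_eq_formPerm_mul_formPerm,
    (disjoint_formPerm_ofFn_finEven_finOdd m).cycleType_mul,
    cycleType_formPerm_ofFn (finEven_injective m) hm,
    cycleType_formPerm_ofFn (finOdd_injective m) hm]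
  rfl

section Pairings

variable (m : ℕ)

def evenPairing : Perm (Fin (2 * m)) :=
  (List.ofFn fun j => swap (finEven m j) (finOdd m j)).prod

def oddPairing : Perm (Fin (2 * m)) :=
  (List.ofFn fun j : Fin (m - 1) =>
    swap (⟨2 * (j : ℕ) + 1, by omega⟩ : Fin (2 * m)) ⟨2 * (j : ℕ) + 2, by omega⟩).prod

theorem val_evenPairing (x : Fin (2 * m)) :
    (evenPairing m x : ℕ) = if (x : ℕ) % 2 = 0 then (x : ℕ) + 1 else (x : ℕ) - 1 := by
  have hinj := (finEven_injective m).sumElim (finOdd_injective m) (finEven_ne_finOdd m)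
  rcases exists_eq_finEven_or_finOdd m x with ⟨j, rfl⟩ | ⟨j, rfl⟩
  · rw [evenPairing, prod_ofFn_swap_apply_left hinj]
    simp [finEven, finOdd]
  · rw [evenPairing, prod_ofFn_swap_apply_right hinj]
    simp [finEven, finOdd]

theorem val_oddPairing (x : Fin (2 * m)) :
    (oddPairing m x : ℕ) = if (x : ℕ) = 0 ∨ (x : ℕ) = 2 * m - 1 then (x : ℕ)
      else if (x : ℕ) % 2 = 1 then (x : ℕ) + 1 else (x : ℕ) - 1 := by
  set a : Fin (m - 1) → Fin (2 * m) := fun j => ⟨2 * (j : ℕ) + 1, by omega⟩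
  set b : Fin (m - 1) → Fin (2 * m) := fun j => ⟨2 * (j : ℕ) + 2, by omega⟩
  have hinj : Injective (Sum.elim a b) := by
    rintro (i | i) (j | j) h <;> simp [a, b, Fin.ext_iff] at h ⊢ <;> omega
  have hx := x.isLt
  by_cases hfix : (x : ℕ) = 0 ∨ (x : ℕ) = 2 * m - 1
  · rw [if_pos hfix, oddPairing, prod_ofFn_swap_apply_of_forall_ne]
    intro j
    simp only [ne_eq, Fin.ext_iff]
    omega
  rw [if_neg hfix]
  rcases Nat.even_or_odd' ((x : ℕ) - 1) with ⟨j, hj | hj⟩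
  · have hxj : x = a ⟨j, by omega⟩ := Fin.ext (by simp only [a]; omega)
    rw [oddPairing, hxj, prod_ofFn_swap_apply_left hinj]
    simp [a, b]
  · have hxj : x = b ⟨j, by omega⟩ := Fin.ext (by simp only [b]; omega)
    rw [oddPairing, hxj, prod_ofFn_swap_apply_right hinj]
    simp [a, b]

theorem evenPairing_mul_self : evenPairing m * evenPairing m = 1 := by
  ext x
  simp only [Perm.mul_apply, Perm.one_apply, val_evenPairing]
  split_ifs <;> omega

theorem oddPairing_mul_self : oddPairing m * oddPairing m = 1 := by
  ext x
  simp only [Perm.mul_apply, Perm.one_apply, val_oddPairing]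
  split_ifs <;> grind

/-- `zigzag m j` is the `j`-th point of the cycle `0 → 2 → ⋯ → 2m-2 → 2m-1 → 2m-3 → ⋯ → 1`. -/
noncomputable def zigzag : Perm (Fin (2 * m)) :=
  Equiv.ofBijective
    (fun j => ⟨if (j : ℕ) < m then 2 * (j : ℕ) else 4 * m - 1 - 2 * (j : ℕ),
      by split_ifs <;> omega⟩)
    (Finite.injective_iff_bijective.1 fun i j h => by
      simp only [Fin.ext_iff] at h
      exact Fin.ext (by split_ifs at h <;> omega))

theorem val_zigzag (j : Fin (2 * m)) :
    (zigzag m j : ℕ) = if (j : ℕ) < m then 2 * (j : ℕ) else 4 * m - 1 - 2 * (j : ℕ) := rfl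

theorem oddPairing_mul_evenPairing_apply_zigzag (j : Fin (2 * m)) :
    (oddPairing m * evenPairing m) (zigzag m j) = zigzag m (finRotate (2 * m) j) := by
  ext
  rw [Perm.mul_apply, val_oddPairing, val_evenPairing, val_zigzag, val_zigzag, val_finRotate]
  split_ifs <;> grind

theorem oddPairing_mul_evenPairing_eq_conj :
    oddPairing m * evenPairing m = zigzag m * finRotate (2 * m) * (zigzag m)⁻¹ := by
  rw [eq_mul_inv_iff_mul_eq]
  ext1 j
  exact oddPairing_mul_evenPairing_apply_zigzag m j

end Pairings

/-- For even `n = 2m`, `m ≥ 2`, with `s₁ = (2 3)(4 5)⋯(2m-2 2m-1)` and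
`s₂ = (1 2)(3 4)⋯(2m-1 2m)` (written `0`-based on `Fin (2m)`),
the commutator `s₁ s₂ s₁⁻¹ s₂⁻¹` is a product of two disjoint cycles of length `m`,
i.e. its cycle type is `{m, m}`. -/
theorem stmt_6 (m : ℕ) (hm : 2 ≤ m)
    (s₁ s₂ : Equiv.Perm (Fin (2 * m)))
    (hs₁ : s₁ = (List.ofFn (fun j : Fin (m - 1) =>
      Equiv.swap (⟨2 * (j : ℕ) + 1, by have := j.isLt; omega⟩ : Fin (2 * m))
                 (⟨2 * (j : ℕ) + 2, by have := j.isLt; omega⟩ : Fin (2 * m)))).prod)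
    (hs₂ : s₂ = (List.ofFn (fun j : Fin m =>
      Equiv.swap (⟨2 * (j : ℕ), by have := j.isLt; omega⟩ : Fin (2 * m))
                 (⟨2 * (j : ℕ) + 1, by have := j.isLt; omega⟩ : Fin (2 * m)))).prod) :
    (s₁ * s₂ * s₁⁻¹ * s₂⁻¹).cycleType = {m, m} := by
  obtain rfl : s₁ = oddPairing m := hs₁
  obtain rfl : s₂ = evenPairing m := hs₂
  rw [mul_mul_inv_mul_inv_eq_sq (oddPairing_mul_self m) (evenPairing_mul_self m),
    oddPairing_mul_evenPairing_eq_conj, conj_pow, cycleType_conj, cycleType_finRotate_sq hm]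
end
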